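/- A vector θ* minimizes cᵀΦθ subject to BΦθ ≤ Φθ if and only if θ* minimizes ‖V* − Φθ‖_{1,c} subject to BΦθ ≤ Φθ, where V* is the fixed point of the monotone contraction B and c has positive entries. -/
import Mathlib


/-- θ* minimizes cᵀΦθ over {θ : BΦθ ≤ Φθ} iff it minimizes ‖V* − Φθ‖₁,c over
the same feasible set, where V* is the fixed point of the monotone
γ-contraction B and c has positive entries. -/
theorem alp_objective_equivalence
    {S : Type} [Fintype S] [Nonempty S] {K : ℕ}
    (B : (S → ℝ) → S → ℝ) (γ : ℝ) (hγ : γ ∈ Set.Ioo (0:ℝ) 1)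
    (hmono : ∀ V₁ V₂ : S → ℝ, (∀ s, V₁ s ≤ V₂ s) → ∀ s, B V₁ s ≤ B V₂ s)
    (hcontr : ∀ V₁ V₂ : S → ℝ,
      (⨆ s, |B V₁ s - B V₂ s|) ≤ γ * ⨆ s, |V₁ s - V₂ s|)
    (Vstar : S → ℝ) (hfix : B Vstar = Vstar)
    (Φ : S → Fin K → ℝ) (c : S → ℝ) (hc : ∀ s, 0 < c s)
    (θstar : Fin K → ℝ)
    (feasible : (Fin K → ℝ) → Prop)
    (hfeas : ∀ θ, feasible θ ↔ ∀ s, B (fun s' => ∑ k, Φ s' k * θ k) s ≤ ∑ k, Φ s k * θ k) :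
    (feasible θstar ∧ ∀ θ, feasible θ →
        ∑ s, c s * ∑ k, Φ s k * θstar k ≤ ∑ s, c s * ∑ k, Φ s k * θ k)
      ↔ (feasible θstar ∧ ∀ θ, feasible θ →
        ∑ s, c s * |Vstar s - ∑ k, Φ s k * θstar k|
          ≤ ∑ s, c s * |Vstar s - ∑ k, Φ s k * θ k|) := by
  have hbdd : ∀ W : S → ℝ, BddAbove (Set.range fun s => |W s|) :=
    fun W => (Set.finite_range _).bddAbove
  -- Key: any V with B V ≤ V satisfies Vstar ≤ V pointwise.
  have key : ∀ V : S → ℝ, (∀ s, B V s ≤ V s) → ∀ s, Vstar s ≤ V s := by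
    intro V hV
    set D : ℝ := ⨆ s, |V s - Vstar s| with hD
    have hD0 : (0:ℝ) ≤ D :=
      le_trans (abs_nonneg _) (le_ciSup (hbdd (fun t => V t - Vstar t)) (Classical.arbitrary S))
    -- iterates stay below V
    have hBn_le : ∀ n s, B^[n] V s ≤ V s := by
      intro n
      induction n with
      | zero => intro s; simp
      | succ n ih =>
        intro s
        rw [Function.iterate_succ_apply']
        exact le_trans (hmono _ _ ih s) (hV s)
    -- contraction estimate
    have hiter : ∀ n, (⨆ s, |B^[n] V s - Vstar s|) ≤ γ ^ n * D := by
      intro n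
      induction n with
      | zero => simp [hD]
      | succ n ih =>
        have h1 : (⨆ s, |B^[n+1] V s - Vstar s|)
            = ⨆ s, |B (B^[n] V) s - B Vstar s| := by
          simp [Function.iterate_succ_apply', hfix]
        rw [h1]
        calc (⨆ s, |B (B^[n] V) s - B Vstar s|)
            ≤ γ * ⨆ s, |B^[n] V s - Vstar s| := hcontr _ _
          _ ≤ γ * (γ ^ n * D) := by
              exact mul_le_mul_of_nonneg_left ih (le_of_lt hγ.1)
          _ = γ ^ (n + 1) * D := by ring
    intro s
    have hpt : ∀ n, Vstar s - V s ≤ γ ^ n * D := by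
      intro n
      have h1 : Vstar s - B^[n] V s ≤ |B^[n] V s - Vstar s| := by
        rw [abs_sub_comm]; exact le_abs_self _
      have h2 : |B^[n] V s - Vstar s| ≤ γ ^ n * D :=
        le_trans (le_ciSup (hbdd (fun t => B^[n] V t - Vstar t)) s) (hiter n)
      have h3 : Vstar s - V s ≤ Vstar s - B^[n] V s := by
        have := hBn_le n s; linarith
      linarith
    have hlim : Filter.Tendsto (fun n => γ ^ n * D) Filter.atTop (nhds 0) := by
      have := tendsto_pow_atTop_nhds_zero_of_lt_one (le_of_lt hγ.1) hγ.2
      simpa using this.mul_const D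
    have : Vstar s - V s ≤ 0 := ge_of_tendsto hlim (Filter.Eventually.of_forall hpt)
    linarith
  -- On the feasible set the two objectives differ by a constant.
  have habs : ∀ θ, feasible θ →
      ∑ s, c s * |Vstar s - ∑ k, Φ s k * θ k|
        = (∑ s, c s * ∑ k, Φ s k * θ k) - ∑ s, c s * Vstar s := by
    intro θ hθ
    have hge := key (fun s => ∑ k, Φ s k * θ k) ((hfeas θ).1 hθ)
    rw [← Finset.sum_sub_distrib]
    apply Finset.sum_congr rfl
    intro s _
    have : |Vstar s - ∑ k, Φ s k * θ k| = (∑ k, Φ s k * θ k) - Vstar s := by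
      rw [abs_sub_comm, abs_of_nonneg (by linarith [hge s])]
    rw [this]; ring
  constructor
  · rintro ⟨h1, h2⟩
    refine ⟨h1, fun θ hθ => ?_⟩
    rw [habs θstar h1, habs θ hθ]
    have := h2 θ hθ; linarith
  · rintro ⟨h1, h2⟩
    refine ⟨h1, fun θ hθ => ?_⟩
    have := h2 θ hθ
    rw [habs θstar h1, habs θ hθ] at this
    linarith
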